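/- arXiv:0906.4883 — 4 statements merged into one kernel-verified Lean document; each statement's English description precedes it below -/
import Mathlib

section
/- Let 1 ≤ p < ∞. A subset F of ℓ^p is totally bounded if and only if (i) F is pointwise bounded (for each coordinate k, the set {x_k : x ∈ F} is bounded), and (ii) for every ε > 0 there exists n such that for every x ∈ F, ∑_{k>n} |x_k|^p < ε^p. -/
/-!
Cutting `f ∈ ℓ^p` off outside a finite set `s` of indices is a 1-Lipschitz operation whose result
tends to `0` as `s` grows (here `p < ∞` is needed), and a pointwise convergent family of
uniformly Lipschitz maps converges uniformly on totally bounded sets: this gives uniform tails.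
Conversely, uniformly small tails put `F` within any `ε` of its truncation to finitely many
coordinates, a bounded subset of a finite-dimensional space, hence totally bounded; and a set that
lies within every `ε` of some totally bounded set is itself totally bounded.
-/

open scoped ENNReal NNReal Topology
open Filter Metric Bornology

section TotallyBounded

variable {α β ι : Type*} [PseudoMetricSpace α] [PseudoMetricSpace β]

theorem totallyBounded_of_forall_subset_thickening {s : Set α}
    (h : ∀ ε > 0, ∃ t, TotallyBounded t ∧ s ⊆ thickening ε t) : TotallyBounded s := by
  refine totallyBounded_iff.2 fun ε hε => ?_
  obtain ⟨t, ht, hst⟩ := h (ε / 2) (half_pos hε)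
  obtain ⟨u, hu, htu⟩ := totallyBounded_iff.1 ht (ε / 2) (half_pos hε)
  refine ⟨u, hu, fun x hx => ?_⟩
  obtain ⟨y, hy, hxy⟩ := mem_thickening_iff.1 (hst hx)
  obtain ⟨z, hz, hyz⟩ := Set.mem_iUnion₂.1 (htu hy)
  refine Set.mem_iUnion₂.2 ⟨z, hz, ?_⟩
  rw [mem_ball] at hyz ⊢
  linarith [dist_triangle x y z]

theorem TotallyBounded.tendstoUniformlyOn_of_lipschitzWith {l : Filter ι} {F : ι → α → β}
    {f : α → β} {K : ℝ≥0} {s : Set α} (hs : TotallyBounded s) (hF : ∀ i, LipschitzWith K (F i))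
    (hf : LipschitzWith K f) (h : ∀ x ∈ s, Tendsto (F · x) l (𝓝 (f x))) :
    TendstoUniformlyOn F f l s := by
  refine tendstoUniformlyOn_iff.2 fun ε hε => ?_
  set δ := ε / (3 * (K + 1))
  have hKδ : K * δ ≤ ε / 3 := by
    rw [mul_div_assoc', div_le_div_iff₀ (by positivity) (by positivity)]
    nlinarith [K.2]
  obtain ⟨t, hts, ht, hst⟩ := finite_approx_of_totallyBounded hs δ (by positivity)
  have hnet : ∀ᶠ i in l, ∀ y ∈ t, dist (f y) (F i y) < ε / 3 :=
    (eventually_all_finite ht).2 fun y hy =>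
      (tendsto_nhds.1 (h y (hts hy)) (ε / 3) (by positivity)).mono fun i hi => by
        rwa [dist_comm]
  filter_upwards [hnet] with i hi x hx
  obtain ⟨y, hy, hxy⟩ := Set.mem_iUnion₂.1 (hst hx)
  rw [mem_ball] at hxy
  have hKxy : K * dist x y ≤ K * δ := mul_le_mul_of_nonneg_left hxy.le K.2
  have hFi := (hF i).dist_le_mul y x
  rw [dist_comm y x] at hFi
  calc dist (f x) (F i x) ≤ dist (f x) (f y) + dist (f y) (F i y) + dist (F i y) (F i x) :=
        dist_triangle4 _ _ _ _
    _ < ε := by linarith [hf.dist_le_mul x y, hi y hy]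

end TotallyBounded

namespace lp

variable {α : Type*} {E : α → Type*} [∀ i, NormedAddCommGroup (E i)] {p : ℝ≥0∞}

theorem isBounded_image_apply [Fact (1 ≤ p)] {F : Set (lp E p)} (hF : IsBounded F) (i : α) :
    IsBounded ((fun f : lp E p => f i) '' F) := by
  obtain ⟨C, hC⟩ := hF.exists_norm_le
  refine isBounded_iff_forall_norm_le.2 ⟨C, Set.forall_mem_image.2 fun f hf => ?_⟩
  exact (norm_apply_le_norm (zero_lt_one.trans_le Fact.out).ne' f i).trans (hC f hf)

variable [DecidableEq α]

noncomputable def tail (s : Finset α) (f : lp E p) : lp E p :=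
  f - ∑ i ∈ s, lp.single p i (f i)

theorem tail_sub (s : Finset α) (f g : lp E p) : tail s (f - g) = tail s f - tail s g := by
  simp only [tail, coeFn_sub, Pi.sub_apply, lp.single_sub, Finset.sum_sub_distrib]
  abel

theorem norm_tail_rpow (hp : 0 < p.toReal) (s : Finset α) (f : lp E p) :
    ‖tail s f‖ ^ p.toReal = ∑' i, (↑s : Set α)ᶜ.indicator (fun i => ‖f i‖ ^ p.toReal) i := by
  rw [tail, lp.norm_compl_sum_single hp, lp.norm_rpow_eq_tsum hp, ← tsum_subtype,
    ← (lp.hasSum_norm hp f).summable.sum_add_tsum_subtype_compl s, add_sub_cancel_left]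
  rfl

theorem norm_tail_le [Fact (1 ≤ p)] (hp : 0 < p.toReal) (s : Finset α) (f : lp E p) :
    ‖tail s f‖ ≤ ‖f‖ := by
  rw [← Real.rpow_le_rpow_iff (norm_nonneg _) (norm_nonneg _) hp, tail,
    lp.norm_compl_sum_single hp, sub_le_self_iff]
  exact Finset.sum_nonneg fun i _ => by positivity

theorem lipschitzWith_tail [Fact (1 ≤ p)] (hp : 0 < p.toReal) (s : Finset α) :
    LipschitzWith 1 (tail (E := E) (p := p) s) :=
  LipschitzWith.of_dist_le_mul fun f g => by
    simpa [dist_eq_norm, ← tail_sub] using norm_tail_le hp s (f - g)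

theorem tendsto_tail [Fact (1 ≤ p)] (hp : p ≠ ∞) (f : lp E p) :
    Tendsto (fun s => tail s f) atTop (𝓝 0) := by
  simpa [tail] using (tendsto_const_nhds (x := f)).sub (lp.hasSum_single hp f)

theorem tendstoUniformlyOn_tail [Fact (1 ≤ p)] (hp : p ≠ ∞) {F : Set (lp E p)}
    (hF : TotallyBounded F) : TendstoUniformlyOn tail 0 atTop F :=
  have hp₀ : 0 < p.toReal := ENNReal.toReal_pos (zero_lt_one.trans_le Fact.out).ne' hp
  hF.tendstoUniformlyOn_of_lipschitzWith (lipschitzWith_tail hp₀) (LipschitzWith.const' 0)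
    fun f _ => tendsto_tail hp f

theorem totallyBounded_image_sum_single [Fact (1 ≤ p)] [∀ i, ProperSpace (E i)]
    (s : Finset α) {F : Set (lp E p)} (hF : ∀ i ∈ s, IsBounded ((fun f : lp E p => f i) '' F)) :
    TotallyBounded ((fun f => ∑ i ∈ s, lp.single p i (f i)) '' F) := by
  let Φ : (∀ i : s, E i) → lp E p := fun g => ∑ i : s, lp.single p i (g i)
  have hΦ : Continuous Φ :=
    continuous_finsetSum _ fun i _ => (isometry_single _).continuous.comp (continuous_apply i)
  have hrestrict : IsBounded ((fun (f : lp E p) (i : s) => f i) '' F) :=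
    forall_isBounded_image_eval_iff.1 fun i => by
      simpa only [Set.image_image] using hF i i.2
  refine ((hrestrict.isCompact_closure.image hΦ).totallyBounded.subset ?_)
  rintro _ ⟨f, hf, rfl⟩
  exact ⟨_, subset_closure ⟨f, hf, rfl⟩, Finset.sum_coe_sort s fun i => lp.single p i (f i)⟩

theorem totallyBounded_of_forall_norm_tail_lt [Fact (1 ≤ p)] [∀ i, ProperSpace (E i)]
    {F : Set (lp E p)} (hF : ∀ i, IsBounded ((fun f : lp E p => f i) '' F))
    (htail : ∀ ε > 0, ∃ s : Finset α, ∀ f ∈ F, ‖tail s f‖ < ε) : TotallyBounded F :=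
  totallyBounded_of_forall_subset_thickening fun ε hε => by
    obtain ⟨s, hs⟩ := htail ε hε
    refine ⟨_, totallyBounded_image_sum_single s fun i _ => hF i, fun f hf => ?_⟩
    exact mem_thickening_iff.2 ⟨_, Set.mem_image_of_mem _ hf, by rw [dist_eq_norm]; exact hs f hf⟩

theorem norm_tail_range_rpow {E : ℕ → Type*} [∀ i, NormedAddCommGroup (E i)]
    (hp : 0 < p.toReal) (f : lp E p) (n : ℕ) :
    ‖tail (Finset.range (n + 1)) f‖ ^ p.toReal = ∑' k : {k // n < k}, ‖f k‖ ^ p.toReal := by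
  have hcompl : (↑(Finset.range (n + 1)) : Set ℕ)ᶜ = {k | n < k} := by
    ext k
    simp
  rw [norm_tail_rpow hp, hcompl]
  exact (tsum_subtype {k | n < k} _).symm

end lp

theorem frechet_lp_compactness (p : ℝ≥0∞) [hp : Fact (1 ≤ p)] (hp' : p ≠ ∞)
    (F : Set (lp (fun _ : ℕ => ℝ) p)) :
    TotallyBounded F ↔
      ((∀ k : ℕ, ∃ M : ℝ, ∀ x ∈ F, |(x : ℕ → ℝ) k| ≤ M) ∧
       (∀ ε > (0 : ℝ), ∃ n : ℕ, ∀ x ∈ F,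
         ∑' k : {k : ℕ // n < k}, |(x : ℕ → ℝ) (k : ℕ)| ^ p.toReal < ε ^ p.toReal)) := by
  have hq : 0 < p.toReal := ENNReal.toReal_pos (zero_lt_one.trans_le hp.out).ne' hp'
  have hbounded : ∀ k, (∃ M : ℝ, ∀ x ∈ F, |(x : ℕ → ℝ) k| ≤ M) ↔
      IsBounded ((fun x : lp (fun _ : ℕ => ℝ) p => x k) '' F) := by
    simp only [isBounded_iff_forall_norm_le, Set.forall_mem_image, Real.norm_eq_abs, implies_true]
  have htail : ∀ ε > (0 : ℝ), ∀ n, ∀ x : lp (fun _ : ℕ => ℝ) p,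
      ∑' k : {k : ℕ // n < k}, |(x : ℕ → ℝ) k| ^ p.toReal < ε ^ p.toReal ↔
        ‖lp.tail (Finset.range (n + 1)) x‖ < ε := by
    intro ε hε n x
    rw [← Real.rpow_lt_rpow_iff (norm_nonneg _) hε.le hq, lp.norm_tail_range_rpow hq]
    simp only [Real.norm_eq_abs]
  simp only [hbounded]
  constructor
  · intro hF
    refine ⟨lp.isBounded_image_apply hF.isBounded, fun ε hε => ?_⟩
    have hunif := tendstoUniformlyOn_iff.1 (lp.tendstoUniformlyOn_tail hp' hF) ε hε
    obtain ⟨n, hn⟩ :=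
      ((tendsto_finset_range.comp (tendsto_add_atTop_nat 1)).eventually hunif).exists
    exact ⟨n, fun x hx => (htail ε hε n x).2 (by simpa using hn x hx)⟩
  · rintro ⟨hbdd, hsmall⟩
    refine lp.totallyBounded_of_forall_norm_tail_lt hbdd fun ε hε => ?_
    obtain ⟨n, hn⟩ := hsmall ε hε
    exact ⟨_, fun x hx => (htail ε hε n x).1 (hn x hx)⟩
end

section
/- Let 1 ≤ p < ∞ and let F be a totally bounded subset of L^p(ℝ^n). Then for every ε > 0 there exists ρ > 0 such that ∫_{ℝ^n} |f(x+y) − f(x)|^p dx < ε^p for every f ∈ F and every y ∈ ℝ^n with |y| < ρ (uniform L^p-equicontinuity of translations). -/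
open MeasureTheory Filter Topology
open scoped ENNReal

/-!
Translation `(y, f) ↦ f(· + y)` is a jointly continuous action of `ℝⁿ` on `Lᵖ` for `p < ∞`, so
`(y, f) ↦ ‖f(· + y) - f‖_p` is continuous and vanishes at `y = 0`. Since `Lᵖ` is complete, the
closure of `F` is compact, and the tube lemma makes the smallness near `y = 0` uniform over `F`.
-/

@[to_additive]
theorem TotallyBounded.eventually_forall_dist_smul_lt {M Y : Type*} [Monoid M]
    [TopologicalSpace M] [PseudoMetricSpace Y] [CompleteSpace Y] [MulAction M Y]
    [ContinuousSMul M Y] {K : Set Y} (hK : TotallyBounded K) {ε : ℝ} (hε : 0 < ε) :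
    ∀ᶠ c in 𝓝 (1 : M), ∀ y ∈ K, dist (c • y) y < ε := by
  have hcont : Continuous fun z : M × Y => dist (z.1 • z.2) z.2 := by fun_prop
  refine (hK.closure.isCompact_of_isClosed isClosed_closure).eventually_forall_of_forall_eventually
    (fun y _ => ?_) |>.mono fun c hc y hy => hc y (subset_closure hy)
  exact hcont.continuousAt.eventually_lt continuousAt_const (by simpa using hε)

namespace MeasureTheory

theorem Lp.integral_norm_rpow_eq_norm_rpow {α E : Type*} [MeasurableSpace α] {μ : Measure α}
    [NormedAddCommGroup E] {p : ℝ≥0∞} (hp₀ : p ≠ 0) (hp : p ≠ ∞) (f : Lp E p μ) :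
    ∫ x, ‖f x‖ ^ p.toReal ∂μ = ‖f‖ ^ p.toReal := by
  rw [Lp.norm_def, toReal_eLpNorm (Lp.aestronglyMeasurable f),
    lpNorm_eq_integral_norm_rpow_toReal hp₀ hp (Lp.aestronglyMeasurable f),
    Real.rpow_inv_rpow (integral_nonneg fun _ => by positivity) (ENNReal.toReal_pos hp₀ hp).ne']

end MeasureTheory

theorem DomAddAct.integral_norm_sub_rpow_eq_dist_vadd_Lp {G E : Type*} [AddCommGroup G]
    [MeasurableSpace G] [MeasurableAdd G] {μ : Measure G} [μ.IsAddLeftInvariant]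
    [NormedAddCommGroup E] {p : ℝ≥0∞} [Fact (1 ≤ p)] (hp : p ≠ ∞) (f : Lp E p μ) (y : G) :
    ∫ x, ‖f (x + y) - f x‖ ^ p.toReal ∂μ = dist (mk y +ᵥ f) f ^ p.toReal := by
  have hp₀ : p ≠ 0 := (zero_lt_one.trans_le Fact.out).ne'
  rw [dist_eq_norm, ← Lp.integral_norm_rpow_eq_norm_rpow hp₀ hp]
  refine integral_congr_ae ?_
  filter_upwards [vadd_Lp_ae_eq (mk y) f, Lp.coeFn_sub (mk y +ᵥ f) f] with x hvadd hsub
  rw [hsub, Pi.sub_apply, hvadd, Equiv.symm_apply_apply, vadd_eq_add, add_comm]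

theorem totallyBounded_uniform_translation (n : ℕ) (p : ℝ≥0∞) [Fact (1 ≤ p)] (hp' : p ≠ ∞)
    (F : Set (Lp ℝ p (volume : Measure (EuclideanSpace ℝ (Fin n)))))
    (hF : TotallyBounded F) :
    ∀ ε > (0 : ℝ), ∃ ρ > (0 : ℝ), ∀ f ∈ F, ∀ y : EuclideanSpace ℝ (Fin n), ‖y‖ < ρ →
      ∫ x : EuclideanSpace ℝ (Fin n), |f (x + y) - f x| ^ p.toReal < ε ^ p.toReal := by
  intro ε hε
  have : Fact (p ≠ ∞) := ⟨hp'⟩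
  have hsmall : ∀ᶠ y in 𝓝 (0 : EuclideanSpace ℝ (Fin n)),
      ∀ f ∈ F, dist (DomAddAct.mk y +ᵥ f) f < ε :=
    (DomAddAct.continuous_mk (M := EuclideanSpace ℝ (Fin n))).tendsto 0 |>.eventually
      (hF.eventually_forall_dist_vadd_lt hε)
  obtain ⟨ρ, hρ, hball⟩ := Metric.eventually_nhds_iff.1 hsmall
  refine ⟨ρ, hρ, fun f hf y hy => ?_⟩
  simp only [← Real.norm_eq_abs, DomAddAct.integral_norm_sub_rpow_eq_dist_vadd_Lp hp' f y]
  have hp : 0 < p.toReal := ENNReal.toReal_pos (zero_lt_one.trans_le Fact.out).ne' hp'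
  exact Real.rpow_lt_rpow dist_nonneg (hball (by simpa using hy) f hf) hp
end

section
/- Let 1 ≤ p < ∞, let Q be an open cube centered at the origin, and let Q_1,…,Q_N be non-overlapping translates of Q. Let P be the operator replacing f on each Q_i by its average over Q_i and by 0 elsewhere. Then for every f ∈ L^p(ℝ^n), ∑_{i=1}^N ∫_{Q_i} |f(x) − Pf(x)|^p dx ≤ (1/|Q|) ∫_{2Q} ∫_{ℝ^n} |f(x) − f(x+y)|^p dx dy, where 2Q is the cube with twice the side length of Q centered at the origin. -/
/-!
On each cube `Q_i`, Jensen's inequality bounds `|f x - ⨍_{Q_i} f|^p` by the average over `z ∈ Q_i`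
of `|f x - f z|^p`. Writing `z = x + y`, the shift `y` ranges in `2Q` because `x` and `z` lie in
the same translate of `Q`. Integrating over `x ∈ Q_i`, summing over the disjoint cubes and
exchanging the order of integration (Tonelli) gives the estimate. The argument runs with lower
Lebesgue integrals, where Tonelli is unconditional; `f ∈ L^p` makes the resulting quantities
finite, so that they agree with the Bochner integrals.
-/

open MeasureTheory ENNReal

section Average
variable {α E : Type*} [MeasurableSpace α] {μ : Measure α} {s : Set α}
  [NormedAddCommGroup E] [NormedSpace ℝ E]

theorem enorm_setAverage_rpow_le {p : ℝ} (hp : 1 ≤ p) (hs0 : μ s ≠ 0) (hs : μ s ≠ ∞)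
    {g : α → E} (hg : AEStronglyMeasurable g (μ.restrict s)) :
    ‖⨍ z in s, g z ∂μ‖ₑ ^ p ≤ (μ s)⁻¹ * ∫⁻ z in s, ‖g z‖ₑ ^ p ∂μ := by
  have hp0 : 0 < p := zero_lt_one.trans_le hp
  have hHolder :
      ∫⁻ z in s, ‖g z‖ₑ ∂μ ≤ (∫⁻ z in s, ‖g z‖ₑ ^ p ∂μ) ^ (1 / p) * μ s ^ (1 - 1 / p) := by
    have := eLpNorm_le_eLpNorm_mul_rpow_measure_univ (p := 1) (q := ENNReal.ofReal p)
      (by simpa using hp) hg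
    rwa [eLpNorm_one_eq_lintegral_enorm, eLpNorm_eq_lintegral_rpow_enorm_toReal
      (by simpa using hp0) ofReal_ne_top, toReal_ofReal hp0.le, Measure.restrict_apply_univ,
      toReal_one, div_one] at this
  have hVp0 : μ s ^ p ≠ 0 := (rpow_pos (pos_iff_ne_zero.2 hs0) hs).ne'
  have hVp : μ s ^ p ≠ ∞ := rpow_ne_top_of_nonneg hp0.le hs
  calc ‖⨍ z in s, g z ∂μ‖ₑ ^ p
      ≤ ((μ s)⁻¹ * ((∫⁻ z in s, ‖g z‖ₑ ^ p ∂μ) ^ (1 / p) * μ s ^ (1 - 1 / p))) ^ p := by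
        gcongr
        rw [setAverage_eq', integral_smul_measure, enorm_smul,
          Real.enorm_toReal (inv_ne_top.2 hs0)]
        exact mul_le_mul_right ((enorm_integral_le_lintegral_enorm _).trans hHolder) _
    _ = ((μ s ^ p)⁻¹ * μ s ^ p) * (μ s)⁻¹ * ∫⁻ z in s, ‖g z‖ₑ ^ p ∂μ := by
        rw [mul_rpow_of_nonneg _ _ hp0.le, mul_rpow_of_nonneg _ _ hp0.le, ← rpow_mul, ← rpow_mul,
          one_div_mul_cancel hp0.ne', rpow_one, sub_mul, one_div_mul_cancel hp0.ne', one_mul,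
          rpow_sub _ _ hs0 hs, rpow_one, inv_rpow, div_eq_mul_inv]
        ring
    _ = (μ s)⁻¹ * ∫⁻ z in s, ‖g z‖ₑ ^ p ∂μ := by rw [ENNReal.inv_mul_cancel hVp0 hVp, one_mul]

theorem setAverage_const_sub [CompleteSpace E] (hs0 : μ s ≠ 0) (hs : μ s ≠ ∞) {f : α → E}
    (hf : IntegrableOn f s μ) (a : E) : ⨍ z in s, (a - f z) ∂μ = a - ⨍ z in s, f z ∂μ := by
  have : IsFiniteMeasure (μ.restrict s) := isFiniteMeasure_restrict.2 hs
  rw [setAverage_eq, setAverage_eq, integral_sub (integrable_const a) hf, smul_sub,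
    setIntegral_const, smul_smul, inv_mul_cancel₀ (measureReal_ne_zero_iff hs |>.2 hs0), one_smul]

end Average

theorem sum_indicator_apply_of_mem {α ι M : Type*} [Fintype ι] [AddCommMonoid M] {s : ι → Set α}
    (hd : Pairwise (Function.onFun Disjoint s)) (g : ι → α → M) {i : ι} {x : α} (hx : x ∈ s i) :
    ∑ j, (s j).indicator (g j) x = g i x := by
  rw [Finset.sum_eq_single_of_mem i (Finset.mem_univ i) fun j _ hji =>
    Set.indicator_of_notMem (Set.disjoint_left.1 (hd hji).symm hx) _, Set.indicator_of_mem hx]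

section Measure
variable {α : Type*} [MeasurableSpace α] {μ : Measure α}

theorem sum_setLIntegral_le_lintegral {ι : Type*} [Fintype ι] {s : ι → Set α}
    (hs : ∀ i, MeasurableSet (s i)) (hd : Pairwise (Function.onFun Disjoint s)) (g : α → ℝ≥0∞) :
    ∑ i, ∫⁻ x in s i, g x ∂μ ≤ ∫⁻ x, g x ∂μ := by
  have hunion := lintegral_iUnion (μ := μ) hs hd g
  rw [tsum_fintype] at hunion
  exact hunion ▸ setLIntegral_le_lintegral _ _

theorem integral_abs_rpow_eq_toReal_lintegral {g : α → ℝ} (hg : AEStronglyMeasurable g μ)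
    {p : ℝ} (hp : 0 ≤ p) : ∫ x, |g x| ^ p ∂μ = (∫⁻ x, ‖g x‖ₑ ^ p ∂μ).toReal := by
  rw [integral_eq_lintegral_of_nonneg_ae (f := fun x => |g x| ^ p)
    (ae_of_all _ fun x => by positivity) (hg.norm.aemeasurable.pow_const p).aestronglyMeasurable]
  congr 1
  refine lintegral_congr fun x => ?_
  rw [Real.enorm_eq_ofReal_abs, ofReal_rpow_of_nonneg (abs_nonneg _) hp]

theorem setIntegral_abs_sub_sum_indicator_setAverage_rpow {ι : Type*} [Fintype ι] {s : ι → Set α}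
    (hs : ∀ i, MeasurableSet (s i)) (hd : Pairwise (Function.onFun Disjoint s)) {f : α → ℝ}
    (hf : AEStronglyMeasurable f μ) {p : ℝ} (hp : 0 ≤ p) (i : ι) :
    ∫ x in s i, |f x - ∑ j, (s j).indicator (fun _ => ⨍ z in s j, f z ∂μ) x| ^ p ∂μ =
      (∫⁻ x in s i, ‖f x - ⨍ z in s i, f z ∂μ‖ₑ ^ p ∂μ).toReal := by
  rw [setIntegral_congr_fun (g := fun x => |f x - ⨍ z in s i, f z ∂μ| ^ p) (hs i)
    fun x hx => by rw [sum_indicator_apply_of_mem hd _ hx]]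
  exact integral_abs_rpow_eq_toReal_lintegral (hf.restrict.sub aestronglyMeasurable_const) hp

end Measure

section AddGroup
variable {G E : Type*} [MeasurableSpace G] [AddGroup G] {μ : Measure G} [NormedAddCommGroup E]
  {p : ℝ}

theorem setLIntegral_le_setLIntegral_comp_add_left [MeasurableAdd G] [μ.IsAddLeftInvariant]
    {s t : Set G} {x : G} (hst : ∀ y, x + y ∈ s → y ∈ t) (g : G → ℝ≥0∞) :
    ∫⁻ z in s, g z ∂μ ≤ ∫⁻ y in t, g (x + y) ∂μ := by
  rw [← (measurePreserving_add_left μ x).setLIntegral_comp_preimage_emb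
    (measurableEmbedding_addLeft x)]
  exact lintegral_mono_set hst

theorem setLIntegral_enorm_sub_setAverage_rpow_le [NormedSpace ℝ E] [CompleteSpace E]
    [MeasurableAdd G] [μ.IsAddLeftInvariant] (hp : 1 ≤ p) {s t : Set G} (hs : MeasurableSet s)
    (hs0 : μ s ≠ 0) (hsi : μ s ≠ ∞) {f : G → E} (hf : IntegrableOn f s μ)
    (hst : ∀ x ∈ s, ∀ y, x + y ∈ s → y ∈ t) :
    ∫⁻ x in s, ‖f x - ⨍ z in s, f z ∂μ‖ₑ ^ p ∂μ ≤
      (μ s)⁻¹ * ∫⁻ x in s, ∫⁻ y in t, ‖f x - f (x + y)‖ₑ ^ p ∂μ ∂μ := by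
  rw [← lintegral_const_mul' _ _ (inv_ne_top.2 hs0)]
  refine setLIntegral_mono' hs fun x hx => ?_
  calc ‖f x - ⨍ z in s, f z ∂μ‖ₑ ^ p
      ≤ (μ s)⁻¹ * ∫⁻ z in s, ‖f x - f z‖ₑ ^ p ∂μ := by
        rw [← setAverage_const_sub hs0 hsi hf]
        exact enorm_setAverage_rpow_le hp hs0 hsi (aestronglyMeasurable_const.sub hf.1)
    _ ≤ (μ s)⁻¹ * ∫⁻ y in t, ‖f x - f (x + y)‖ₑ ^ p ∂μ := by
        gcongr (μ s)⁻¹ * ?_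
        exact setLIntegral_le_setLIntegral_comp_add_left (hst x hx) _

theorem aemeasurable_enorm_sub_comp_add_rpow [MeasurableAdd₂ G] [SFinite μ]
    [μ.IsAddLeftInvariant] {f : G → E} (hf : AEStronglyMeasurable f μ) :
    AEMeasurable (fun q : G × G => ‖f q.1 - f (q.1 + q.2)‖ₑ ^ p) (μ.prod μ) :=
  (hf.comp_fst.sub <| hf.comp_quasiMeasurePreserving <|
    quasiMeasurePreserving_add (μ := μ) (ν := μ)).enorm.pow_const p

theorem sum_setLIntegral_enorm_sub_setAverage_rpow_le [NormedSpace ℝ E] [CompleteSpace E]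
    [MeasurableAdd₂ G] [SFinite μ] [μ.IsAddLeftInvariant] {ι : Type*} [Fintype ι] (hp : 1 ≤ p)
    {s : ι → Set G} {t : Set G} {V : ℝ≥0∞} (hs : ∀ i, MeasurableSet (s i))
    (hd : Pairwise (Function.onFun Disjoint s)) (hsV : ∀ i, μ (s i) = V) (hV0 : V ≠ 0)
    (hV : V ≠ ∞) {f : G → E} (hfm : AEStronglyMeasurable f μ) (hfi : ∀ i, IntegrableOn f (s i) μ)
    (hst : ∀ i, ∀ x ∈ s i, ∀ y, x + y ∈ s i → y ∈ t) :
    ∑ i, ∫⁻ x in s i, ‖f x - ⨍ z in s i, f z ∂μ‖ₑ ^ p ∂μ ≤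
      V⁻¹ * ∫⁻ y in t, ∫⁻ x, ‖f x - f (x + y)‖ₑ ^ p ∂μ ∂μ := by
  calc ∑ i, ∫⁻ x in s i, ‖f x - ⨍ z in s i, f z ∂μ‖ₑ ^ p ∂μ
      ≤ ∑ i, V⁻¹ * ∫⁻ x in s i, ∫⁻ y in t, ‖f x - f (x + y)‖ₑ ^ p ∂μ ∂μ :=
        Finset.sum_le_sum fun i _ => by
          simpa only [hsV i] using setLIntegral_enorm_sub_setAverage_rpow_le hp (hs i)
            (hsV i ▸ hV0) (hsV i ▸ hV) (hfi i) (hst i)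
    _ ≤ V⁻¹ * ∫⁻ x, ∫⁻ y in t, ‖f x - f (x + y)‖ₑ ^ p ∂μ ∂μ := by
        rw [← Finset.mul_sum]
        gcongr
        exact sum_setLIntegral_le_lintegral hs hd _
    _ = V⁻¹ * ∫⁻ y in t, ∫⁻ x, ‖f x - f (x + y)‖ₑ ^ p ∂μ ∂μ := by
        rw [lintegral_lintegral_swap ((aemeasurable_enorm_sub_comp_add_rpow hfm).mono_ac
          (Measure.AbsolutelyContinuous.rfl.prod Measure.restrict_le_self.absolutelyContinuous))]

theorem lintegral_enorm_sub_comp_add_right_rpow_le [MeasurableAdd G] [μ.IsAddRightInvariant]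
    (hp : 1 ≤ p) {f : G → E} (hf : AEStronglyMeasurable f μ) (y : G) :
    ∫⁻ x, ‖f x - f (x + y)‖ₑ ^ p ∂μ ≤ (2 * eLpNorm f (ENNReal.ofReal p) μ) ^ p := by
  have hp0 : 0 < p := zero_lt_one.trans_le hp
  have hshift := measurePreserving_add_right μ y
  rw [lintegral_rpow_enorm_eq_rpow_eLpNorm' hp0, ← toReal_ofReal hp0.le,
    ← eLpNorm_eq_eLpNorm' (by simpa using hp0) ofReal_ne_top, toReal_ofReal hp0.le]
  gcongr
  calc eLpNorm (fun x => f x - f (x + y)) (ENNReal.ofReal p) μ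
      ≤ eLpNorm f (ENNReal.ofReal p) μ + eLpNorm (fun x => f (x + y)) (ENNReal.ofReal p) μ :=
        eLpNorm_sub_le hf (hf.comp_measurePreserving hshift) (by simpa using hp)
    _ = 2 * eLpNorm f (ENNReal.ofReal p) μ := by
        rw [show (fun x => f (x + y)) = f ∘ (· + y) from rfl,
          eLpNorm_comp_measurePreserving hf hshift, two_mul]

theorem lintegral_enorm_sub_comp_add_right_rpow_lt_top [MeasurableAdd G] [μ.IsAddRightInvariant]
    (hp : 1 ≤ p) {f : G → E} (hf : MemLp f (ENNReal.ofReal p) μ) (y : G) :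
    ∫⁻ x, ‖f x - f (x + y)‖ₑ ^ p ∂μ < ∞ :=
  (lintegral_enorm_sub_comp_add_right_rpow_le hp hf.1 y).trans_lt <|
    rpow_lt_top_of_nonneg (zero_le_one.trans hp) (mul_ne_top ofNat_ne_top hf.2.ne)

theorem setLIntegral_lintegral_enorm_sub_comp_add_rpow_ne_top [MeasurableAdd G]
    [μ.IsAddRightInvariant] (hp : 1 ≤ p) {f : G → E} (hf : MemLp f (ENNReal.ofReal p) μ)
    {t : Set G} (ht : μ t ≠ ∞) :
    ∫⁻ y in t, ∫⁻ x, ‖f x - f (x + y)‖ₑ ^ p ∂μ ∂μ ≠ ∞ := by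
  refine ne_top_of_le_ne_top ?_ (lintegral_mono fun y =>
    lintegral_enorm_sub_comp_add_right_rpow_le hp hf.1 y)
  rw [setLIntegral_const]
  exact mul_ne_top (rpow_ne_top_of_nonneg (zero_le_one.trans hp)
    (mul_ne_top ofNat_ne_top hf.2.ne)) ht

theorem setIntegral_integral_abs_sub_comp_add_rpow_eq_toReal [MeasurableAdd₂ G] [SFinite μ]
    [μ.IsAddLeftInvariant] [μ.IsAddRightInvariant] (hp : 1 ≤ p) {f : G → ℝ}
    (hf : MemLp f (ENNReal.ofReal p) μ) (t : Set G) :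
    ∫ y in t, ∫ x, |f x - f (x + y)| ^ p ∂μ ∂μ =
      (∫⁻ y in t, ∫⁻ x, ‖f x - f (x + y)‖ₑ ^ p ∂μ ∂μ).toReal := by
  have hinner (y : G) : ∫ x, |f x - f (x + y)| ^ p ∂μ =
      (∫⁻ x, ‖f x - f (x + y)‖ₑ ^ p ∂μ).toReal :=
    integral_abs_rpow_eq_toReal_lintegral
      (hf.1.sub (hf.1.comp_measurePreserving (measurePreserving_add_right μ y)))
      (zero_le_one.trans hp)
  simp_rw [hinner]
  exact integral_toReal (aemeasurable_enorm_sub_comp_add_rpow hf.1).lintegral_prod_left'.restrict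
    (ae_of_all _ (lintegral_enorm_sub_comp_add_right_rpow_lt_top hp hf))

end AddGroup

section Cube
variable {ι : Type*}

def cube (c : EuclideanSpace ℝ ι) (r : ℝ) : Set (EuclideanSpace ℝ ι) :=
  {x | ∀ j, |x j - c j| < r}

@[simp]
theorem cube_zero (r : ℝ) : cube (0 : EuclideanSpace ℝ ι) r = {x | ∀ j, |x j| < r} := by
  simp [cube]

theorem cube_eq_preimage_pi (c : EuclideanSpace ℝ ι) (r : ℝ) :
    cube c r = WithLp.ofLp ⁻¹' Set.univ.pi fun j => Set.Ioo (c j - r) (c j + r) := by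
  ext x
  simp only [cube, Set.mem_ofPred_eq, Set.mem_preimage, Set.mem_univ_pi, Set.mem_Ioo,
    abs_sub_lt_iff]
  refine forall_congr' fun j => ?_
  constructor <;> rintro ⟨h₁, h₂⟩ <;> constructor <;> linarith

theorem measurableSet_cube [Fintype ι] (c : EuclideanSpace ℝ ι) (r : ℝ) :
    MeasurableSet (cube c r) := by
  rw [cube_eq_preimage_pi]
  exact (MeasurableSet.univ_pi fun _ => measurableSet_Ioo).preimage (by fun_prop)

theorem volume_cube [Fintype ι] (c : EuclideanSpace ℝ ι) (r : ℝ) :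
    volume (cube c r) = ENNReal.ofReal (2 * r) ^ Fintype.card ι := by
  rw [cube_eq_preimage_pi, (PiLp.volume_preserving_ofLp ι).measure_preimage
    (MeasurableSet.univ_pi fun _ => measurableSet_Ioo).nullMeasurableSet, volume_pi_pi]
  simp [Real.volume_Ioo, two_mul]

theorem volume_cube_ne_top [Fintype ι] (c : EuclideanSpace ℝ ι) (r : ℝ) :
    volume (cube c r) ≠ ∞ := by
  rw [volume_cube]
  exact pow_ne_top ofReal_ne_top

theorem mem_cube_zero_two_mul_of_add_mem {c x y : EuclideanSpace ℝ ι} {r : ℝ}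
    (hx : x ∈ cube c r) (hxy : x + y ∈ cube c r) : y ∈ cube 0 (2 * r) := by
  intro j
  have key := (abs_sub (x j + y j - c j) (x j - c j)).trans_lt (add_lt_add (hxy j) (hx j))
  simpa [two_mul] using key

end Cube

theorem averaging_operator_estimate_general (n N : ℕ) (p : ℝ) (hp : 1 ≤ p)
    (h : ℝ)
    (c : Fin N → EuclideanSpace ℝ (Fin n))
    (Q : Fin N → Set (EuclideanSpace ℝ (Fin n)))
    (hQ : ∀ i, Q i = {x | ∀ j, |x j - c i j| < h})
    (hdisj : Pairwise (Function.onFun Disjoint Q))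
    (Q0 Q2 : Set (EuclideanSpace ℝ (Fin n)))
    (hQ0 : Q0 = {x | ∀ j, |x j| < h})
    (hQ2 : Q2 = {x | ∀ j, |x j| < 2 * h})
    (P : (EuclideanSpace ℝ (Fin n) → ℝ) → (EuclideanSpace ℝ (Fin n) → ℝ))
    (hP : ∀ g x, P g x = ∑ i : Fin N,
      Set.indicator (Q i) (fun _ => (volume (Q i)).toReal⁻¹ * ∫ z in Q i, g z) x)
    (f : EuclideanSpace ℝ (Fin n) → ℝ) (hf : MemLp f (ENNReal.ofReal p) volume) :
    ∑ i : Fin N, ∫ x in Q i, |f x - P f x| ^ p ≤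
      (volume Q0).toReal⁻¹ * ∫ y in Q2, ∫ x : EuclideanSpace ℝ (Fin n), |f x - f (x + y)| ^ p := by
  have hQc : ∀ i, Q i = cube (c i) h := hQ
  rw [← cube_zero] at hQ0 hQ2
  have hvol (i : Fin N) : volume (Q i) = volume Q0 := by rw [hQc, hQ0, volume_cube, volume_cube]
  obtain hV0 | hV0 := eq_or_ne (volume Q0) 0
  · rw [hV0, toReal_zero, _root_.inv_zero, zero_mul]
    exact (Finset.sum_eq_zero fun i _ => setIntegral_measure_zero _ ((hvol i).trans hV0)).le
  have hV : volume Q0 ≠ ∞ := hQ0 ▸ volume_cube_ne_top _ _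
  have hQm (i : Fin N) : MeasurableSet (Q i) := hQc i ▸ measurableSet_cube _ _
  have hfi (i : Fin N) : IntegrableOn f (Q i) :=
    have : IsFiniteMeasure (volume.restrict (Q i)) := isFiniteMeasure_restrict.2 (hvol i ▸ hV)
    (hf.restrict _).integrable (by simpa using hp)
  have hPf : P f = fun x => ∑ i, (Q i).indicator (fun _ => ⨍ z in Q i, f z) x := by
    ext x
    simp only [hP, setAverage_eq, smul_eq_mul, measureReal_def]
  have hsum := sum_setLIntegral_enorm_sub_setAverage_rpow_le hp hQm hdisj hvol hV0 hV hf.1 hfi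
    fun i x hx y hxy => hQ2 ▸ mem_cube_zero_two_mul_of_add_mem (hQc i ▸ hx) (hQc i ▸ hxy)
  have hbound : (volume Q0)⁻¹ * ∫⁻ y in Q2, ∫⁻ x, ‖f x - f (x + y)‖ₑ ^ p ≠ ∞ :=
    mul_ne_top (inv_ne_top.2 hV0) <| setLIntegral_lintegral_enorm_sub_comp_add_rpow_ne_top hp hf
      (hQ2 ▸ volume_cube_ne_top _ _)
  simp_rw [hPf, setIntegral_abs_sub_sum_indicator_setAverage_rpow hQm hdisj hf.1
    (zero_le_one.trans hp)]
  rw [← toReal_sum fun i _ => sum_ne_top.1 (ne_top_of_le_ne_top hbound hsum) i (Finset.mem_univ i),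
    setIntegral_integral_abs_sub_comp_add_rpow_eq_toReal hp hf, ← toReal_inv, ← toReal_mul]
  exact toReal_mono hbound hsum

theorem averaging_operator_estimate (n N : ℕ) (p : ℝ) (hp : 1 ≤ p)
    (h : ℝ) (hh : 0 < h)
    (c : Fin N → EuclideanSpace ℝ (Fin n))
    (Q : Fin N → Set (EuclideanSpace ℝ (Fin n)))
    (hQ : ∀ i, Q i = {x | ∀ j, |x j - c i j| < h})
    (hdisj : Pairwise (Function.onFun Disjoint Q))
    (Q0 Q2 : Set (EuclideanSpace ℝ (Fin n)))
    (hQ0 : Q0 = {x | ∀ j, |x j| < h})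
    (hQ2 : Q2 = {x | ∀ j, |x j| < 2 * h})
    (P : (EuclideanSpace ℝ (Fin n) → ℝ) → (EuclideanSpace ℝ (Fin n) → ℝ))
    (hP : ∀ g x, P g x = ∑ i : Fin N,
      Set.indicator (Q i) (fun _ => (volume (Q i)).toReal⁻¹ * ∫ z in Q i, g z) x)
    (f : EuclideanSpace ℝ (Fin n) → ℝ) (hf : MemLp f (ENNReal.ofReal p) volume) :
    ∑ i : Fin N, ∫ x in Q i, |f x - P f x| ^ p ≤
      (volume Q0).toReal⁻¹ * ∫ y in Q2, ∫ x : EuclideanSpace ℝ (Fin n), |f x - f (x + y)| ^ p :=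
  averaging_operator_estimate_general n N p hp h c Q hQ hdisj Q0 Q2 hQ0 hQ2 P hP f hf
end

section
/- Let (u_n) be a sequence of functions of bounded variation on a bounded real interval [a,b], and suppose there is a constant M with TV(u_n) ≤ M and ‖u_n‖_∞ ≤ M for all n. Then there is a subsequence of (u_n) converging pointwise everywhere on [a,b] and in L^1([a,b]) to a function of bounded variation. -/
open MeasureTheory Filter Set
open scoped ENNReal Topology

/-!
Write each `u n` on `[a, b]` as the difference of the monotone functions `x ↦ TV(u n, [a, x])`
and `x ↦ TV(u n, [a, x]) - u n x`, extended constantly outside `[a, b]`; both are bounded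
uniformly in `n`. So it suffices to extract pointwise convergent subsequences from uniformly
bounded monotone functions. A diagonal argument gives convergence on `ℚ`, hence, by
monotonicity, at every continuity point of the monotone function interpolating the limit; the
remaining points are countably many and a second diagonal argument handles them.
The limit has bounded variation since the variation is lower semicontinuous under pointwise
convergence, and `L¹` convergence follows by dominated convergence.
-/

theorem exists_subseq_tendsto_of_countable {α : Type*} {T : Set α} (hT : T.Countable)
    {f : ℕ → α → ℝ} {C : ℝ} (hf : ∀ n, ∀ x ∈ T, |f n x| ≤ C) :
    ∃ φ : ℕ → ℕ, StrictMono φ ∧ ∃ g : α → ℝ,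
      ∀ x ∈ T, Tendsto (fun k => f (φ k) x) atTop (𝓝 (g x)) := by
  classical
  have := hT.to_subtype
  let F : ℕ → T → Icc (-C) C := fun n x => ⟨f n x, abs_le.mp (hf n x x.2)⟩
  obtain ⟨L, φ, hφ, hL⟩ := SeqCompactSpace.tendsto_subseq F
  refine ⟨φ, hφ, fun x => if hx : x ∈ T then L ⟨x, hx⟩ else 0, fun x hx => ?_⟩
  simp only [dif_pos hx]
  exact (continuous_subtype_val.tendsto _).comp (((continuous_apply ⟨x, hx⟩).tendsto _).comp hL)

theorem tendsto_of_monotone_of_continuousAt {ι : Type*} {l : Filter ι} {f : ι → ℝ → ℝ}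
    (hf : ∀ i, Monotone (f i)) {D : Set ℝ} (hD : Dense D) {g G : ℝ → ℝ}
    (hg : ∀ q ∈ D, Tendsto (f · q) l (𝓝 (g q)))
    (hleG : ∀ q ∈ D, ∀ x, q < x → g q ≤ G x) (hGle : ∀ q ∈ D, ∀ x, x < q → G x ≤ g q)
    {x : ℝ} (hx : ContinuousAt G x) : Tendsto (f · x) l (𝓝 (G x)) := by
  rw [tendsto_order]
  constructor
  · intro c hc
    obtain ⟨y, hyx, hcy⟩ := (hx.eventually (lt_mem_nhds hc)).exists_lt
    obtain ⟨q, hqD, hyq, hqx⟩ := hD.exists_between hyx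
    filter_upwards [(hg q hqD).eventually (lt_mem_nhds (hcy.trans_le (hGle q hqD y hyq)))]
      with i hi
    exact hi.trans_le (hf i hqx.le)
  · intro c hc
    obtain ⟨y, hxy, hcy⟩ := (hx.eventually (gt_mem_nhds hc)).exists_gt
    obtain ⟨q, hqD, hxq, hqy⟩ := hD.exists_between hxy
    filter_upwards [(hg q hqD).eventually (gt_mem_nhds ((hleG q hqD y hqy).trans_lt hcy))]
      with i hi
    exact (hf i hxq.le).trans_lt hi

theorem exists_monotone_tendsto_of_continuousAt {ι : Type*} {l : Filter ι} [l.NeBot]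
    {f : ι → ℝ → ℝ} (hf : ∀ i, Monotone (f i)) {C : ℝ} (hC : ∀ i x, f i x ≤ C)
    {D : Set ℝ} (hD : Dense D) {g : ℝ → ℝ} (hg : ∀ q ∈ D, Tendsto (f · q) l (𝓝 (g q))) :
    ∃ G : ℝ → ℝ, Monotone G ∧ ∀ x, ContinuousAt G x → Tendsto (f · x) l (𝓝 (G x)) := by
  have hg_mono : ∀ p ∈ D, ∀ q ∈ D, p ≤ q → g p ≤ g q := fun p hp q hq hpq =>
    le_of_tendsto_of_tendsto' (hg p hp) (hg q hq) fun i => hf i hpq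
  have hgC : ∀ q ∈ D, g q ≤ C := fun q hq => le_of_tendsto' (hg q hq) fun i => hC i q
  let G : ℝ → ℝ := fun x => sSup (g '' (D ∩ Iio x))
  have hleG : ∀ q ∈ D, ∀ x, q < x → g q ≤ G x := fun q hq x hqx =>
    le_csSup ⟨C, forall_mem_image.2 fun p hp => hgC p hp.1⟩ (mem_image_of_mem g ⟨hq, hqx⟩)
  have hGle : ∀ q ∈ D, ∀ x, x < q → G x ≤ g q := by
    intro q hq x hxq
    obtain ⟨p, hpD, hp⟩ := hD.exists_lt x
    exact csSup_le ⟨g p, mem_image_of_mem g ⟨hpD, hp⟩⟩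
      (forall_mem_image.2 fun p hp => hg_mono p hp.1 q hq (hp.2.trans hxq).le)
  refine ⟨G, fun x y hxy => ?_, fun x => tendsto_of_monotone_of_continuousAt hf hD hg hleG hGle⟩
  rcases hxy.lt_or_eq with hxy | rfl
  · obtain ⟨q, hqD, hxq, hqy⟩ := hD.exists_between hxy
    exact (hGle q hqD x hxq).trans (hleG q hqD y hqy)
  · rfl

theorem exists_subseq_tendsto_of_monotone {f : ℕ → ℝ → ℝ} (hf : ∀ n, Monotone (f n)) {C : ℝ}
    (hC : ∀ n x, |f n x| ≤ C) :
    ∃ φ : ℕ → ℕ, StrictMono φ ∧ ∃ g : ℝ → ℝ, ∀ x, Tendsto (fun k => f (φ k) x) atTop (𝓝 (g x)) := by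
  obtain ⟨φ₁, hφ₁, g₁, hg₁⟩ := exists_subseq_tendsto_of_countable (countable_range ((↑) : ℚ → ℝ))
    (fun n x _ => hC n x)
  classical
  obtain ⟨G, hG, hfG⟩ := exists_monotone_tendsto_of_continuousAt (fun k => hf (φ₁ k))
    (fun k x => (abs_le.mp (hC (φ₁ k) x)).2) Rat.denseRange_cast hg₁
  obtain ⟨φ₂, hφ₂, g₂, hg₂⟩ := exists_subseq_tendsto_of_countable hG.countable_not_continuousAt
    (f := fun k => f (φ₁ k)) (fun k x _ => hC (φ₁ k) x)
  refine ⟨φ₁ ∘ φ₂, hφ₁.comp hφ₂, fun x => if ContinuousAt G x then G x else g₂ x, fun x => ?_⟩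
  by_cases hx : ContinuousAt G x
  · simp only [if_pos hx]
    exact (hfG x hx).comp hφ₂.tendsto_atTop
  · simp only [if_neg hx]
    exact hg₂ x hx

theorem exists_monotone_sub_eqOn_of_eVariationOn_le {f : ℝ → ℝ} {a b M : ℝ} (hab : a ≤ b)
    (hvar : eVariationOn f (Icc a b) ≤ ENNReal.ofReal M) (hf : ∀ x ∈ Icc a b, |f x| ≤ M) :
    ∃ P Q : ℝ → ℝ, Monotone P ∧ Monotone Q ∧ (∀ x, |P x| ≤ M) ∧ (∀ x, |Q x| ≤ 2 * M) ∧
      EqOn f (P - Q) (Icc a b) := by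
  have ha : a ∈ Icc a b := left_mem_Icc.2 hab
  have hM : 0 ≤ M := (abs_nonneg _).trans (hf a ha)
  have hBV : LocallyBoundedVariationOn f (Icc a b) :=
    BoundedVariationOn.locallyBoundedVariationOn (ne_top_of_le_ne_top ENNReal.ofReal_ne_top hvar)
  let c : ℝ → ℝ := fun x => projIcc a b hab x
  have hc : Monotone c := fun x y hxy => Subtype.mono_coe _ (monotone_projIcc hab hxy)
  have hcI : ∀ x, c x ∈ Icc a b := fun x => (projIcc a b hab x).2
  let P : ℝ → ℝ := fun x => variationOnFromTo f (Icc a b) a (c x)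
  have hP : ∀ x, |P x| ≤ M := by
    intro x
    rw [abs_of_nonneg (variationOnFromTo.nonneg_of_le _ _ (hcI x).1),
      variationOnFromTo.eq_of_le _ _ (hcI x).1]
    exact ENNReal.toReal_le_of_le_ofReal hM ((eVariationOn.mono _ inter_subset_left).trans hvar)
  refine ⟨P, fun x => P x - f (c x), fun x y hxy => ?_, fun x y hxy => ?_, hP, fun x => ?_,
    fun x hx => ?_⟩
  · exact variationOnFromTo.monotoneOn hBV ha (hcI x) (hcI y) (hc hxy)
  · exact variationOnFromTo.sub_self_monotoneOn hBV ha (hcI x) (hcI y) (hc hxy)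
  · exact (abs_sub _ _).trans (by linarith [hP x, hf _ (hcI x)])
  · simp [c, projIcc_of_mem hab hx]

theorem eVariationOn_le_of_tendsto {α E ι : Type*} [LinearOrder α] [PseudoEMetricSpace E]
    {l : Filter ι} [l.NeBot] {F : ι → α → E} {f : α → E} {s : Set α}
    (hF : ∀ x ∈ s, Tendsto (F · x) l (𝓝 (f x))) {C : ℝ≥0∞}
    (hC : ∀ᶠ i in l, eVariationOn (F i) s ≤ C) : eVariationOn f s ≤ C := by
  by_contra! h
  obtain ⟨i, hlt, hle⟩ := ((eVariationOn.lowerSemicontinuous_aux hF h).and hC).exists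
  exact hlt.not_ge hle

theorem tendsto_integral_abs_sub_of_tendsto_ae {α : Type*} [MeasurableSpace α] {μ : Measure α}
    [IsFiniteMeasure μ] {F : ℕ → α → ℝ} {f : α → ℝ} {C : ℝ}
    (hF : ∀ n, AEStronglyMeasurable (F n) μ) (hC : ∀ n, ∀ᵐ x ∂μ, |F n x| ≤ C)
    (hlim : ∀ᵐ x ∂μ, Tendsto (F · x) atTop (𝓝 (f x))) :
    Tendsto (fun n => ∫ x, |F n x - f x| ∂μ) atTop (𝓝 0) := by
  have hf : AEStronglyMeasurable f μ := aestronglyMeasurable_of_tendsto_ae atTop hF hlim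
  have hfC : ∀ᵐ x ∂μ, |f x| ≤ C := by
    filter_upwards [ae_all_iff.2 hC, hlim] with x hxC hx
    exact le_of_tendsto' hx.abs hxC
  simpa using tendsto_integral_of_dominated_convergence (F := fun n x => |F n x - f x|)
    (f := fun _ => 0) (fun _ => C + C)
    (fun n => ((hF n).sub hf).norm) (integrable_const _)
    (fun n => by
      filter_upwards [hC n, hfC] with x h₁ h₂
      simpa using (abs_sub _ _).trans (add_le_add h₁ h₂))
    (by
      filter_upwards [hlim] with x hx
      simpa using (hx.sub_const (f x)).norm)

theorem helly_selection (a b : ℝ) (hab : a < b) (u : ℕ → ℝ → ℝ) (M : ℝ)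
    (hTV : ∀ n, eVariationOn (u n) (Set.Icc a b) ≤ ENNReal.ofReal M)
    (hbdd : ∀ n, ∀ x ∈ Set.Icc a b, |u n x| ≤ M) :
    ∃ φ : ℕ → ℕ, StrictMono φ ∧ ∃ v : ℝ → ℝ,
      eVariationOn v (Set.Icc a b) ≠ ∞ ∧
      (∀ x ∈ Set.Icc a b, Tendsto (fun k => u (φ k) x) atTop (𝓝 (v x))) ∧
      Tendsto (fun k => ∫ x in Set.Icc a b, |u (φ k) x - v x|) atTop (𝓝 0) := by
  choose P Q hP hQ hPM hQM hu using fun n =>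
    exists_monotone_sub_eqOn_of_eVariationOn_le hab.le (hTV n) (hbdd n)
  obtain ⟨φ₁, hφ₁, gP, hgP⟩ := exists_subseq_tendsto_of_monotone hP hPM
  obtain ⟨φ₂, hφ₂, gQ, hgQ⟩ :=
    exists_subseq_tendsto_of_monotone (fun k => hQ (φ₁ k)) (fun k => hQM (φ₁ k))
  have hconv : ∀ x ∈ Icc a b,
      Tendsto (fun k => u (φ₁ (φ₂ k)) x) atTop (𝓝 (gP x - gQ x)) := fun x hx =>
    (((hgP x).comp hφ₂.tendsto_atTop).sub (hgQ x)).congr fun k => (hu _ hx).symm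
  refine ⟨φ₁ ∘ φ₂, hφ₁.comp hφ₂, fun x => gP x - gQ x,
    ne_top_of_le_ne_top ENNReal.ofReal_ne_top
      (eVariationOn_le_of_tendsto hconv (Eventually.of_forall fun k => hTV _)), hconv, ?_⟩
  have hmeas : ∀ n, AEStronglyMeasurable (u n) (volume.restrict (Icc a b)) := fun n =>
    ((hP n).measurable.sub (hQ n).measurable).aestronglyMeasurable.congr
      (ae_restrict_of_forall_mem measurableSet_Icc fun x hx => (hu n hx).symm)
  exact tendsto_integral_abs_sub_of_tendsto_ae (fun k => hmeas _)
    (fun k => ae_restrict_of_forall_mem measurableSet_Icc (hbdd _))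
    (ae_restrict_of_forall_mem measurableSet_Icc hconv)
end
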